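/- Assume √2·L < 1, let p ≥ 1 be an integer, and suppose θ_{i+p} = θ_i + p·ω for all i ∈ ℤ (the p-property). Then the unique bounded measurable ξ : ℝ → ℝ^{m+1} with ξ = Tξ is pω-periodic: ξ(t + pω) = ξ(t) for all t ∈ ℝ (assertion 1 of Theorem 1). -/

import Mathlib

/-
The p-property says that shifting time by pω maps the impulse moments θ_i onto θ_{i+p}, so
`T` commutes with the shift and `t ↦ ξ (t + pω)` is again a bounded measurable fixed point.
Fixed points of `T` are unique: if `D` is the supremum of `‖φ(s) - ψ(s)‖`, the kernels
`e^{-k(t-s)}` have mass `1/k`, and since there is one impulse in each window of length `ω` the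
impulse weights are dominated by the geometric series `e^{k₀ω} Σ e^{-k₀ω n}`; together with the
Lipschitz bounds this gives `‖Tφ(t) - Tψ(t)‖ ≤ √2 · L · D`, hence `D ≤ √2 · L · D` and `D = 0`.
-/

/-- The Euclidean norm on `Fin n → ℝ`. -/
noncomputable def eNorm {n : ℕ} (v : Fin n → ℝ) : ℝ := Real.sqrt (∑ j, v j ^ 2)

/-- The operator `T` of the paper: coordinate `0` (the systemic arterial pressure) gets
`(Tφ)₀(t) = −∫_{−∞}^t e^{−k₀(t−s)} g₀(φ₀(s)−φ₁(s),…,φ₀(s)−φ_m(s)) ds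
  + Σ_{θ_i < t} e^{−k₀(t−θ_i)} (I₀ + J₀(φ₀(θ_i)))`,
and the compartment coordinates `j = 1,…,m` (nonzero indices of `Fin (m+1)`) get
`(Tφ)_j(t) = ∫_{−∞}^t e^{−k_j(t−s)} g_j(φ₀(s)−φ_j(s)) ds`. -/
noncomputable def Tmap (m : ℕ) (θ : ℤ → ℝ) (k : Fin (m + 1) → ℝ) (I₀ : ℝ)
    (g₀ : (Fin m → ℝ) → ℝ) (g : Fin (m + 1) → ℝ → ℝ) (J₀ : ℝ → ℝ)
    (φ : ℝ → Fin (m + 1) → ℝ) : ℝ → Fin (m + 1) → ℝ := fun t j =>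
  if j = 0 then
    -(∫ s in Set.Iic t, Real.exp (-(k 0) * (t - s)) * g₀ (fun i => φ s 0 - φ s i.succ))
      + ∑' i : ℤ, (if θ i < t then Real.exp (-(k 0) * (t - θ i)) * (I₀ + J₀ (φ (θ i) 0)) else 0)
  else
    ∫ s in Set.Iic t, Real.exp (-(k j) * (t - s)) * g j (φ s 0 - φ s j)

/-- The set `Ω`: bounded measurable functions `φ : ℝ → ℝ^{m+1}` with
`|φ₀(t)| ≤ m₀/k₀ + (I₀ + m_J)·e^{k₀ω}/(1 − e^{−k₀ω})` and `|φ_j(t)| ≤ m_j/k_j`. -/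
def OmegaSet (m : ℕ) (ω : ℝ) (k mc : Fin (m + 1) → ℝ) (I₀ mJ : ℝ) :
    Set (ℝ → Fin (m + 1) → ℝ) :=
  {φ | Measurable φ ∧ (∃ B, ∀ t, eNorm (φ t) ≤ B) ∧ ∀ t,
    |φ t 0| ≤ mc 0 / k 0 + (I₀ + mJ) * Real.exp (k 0 * ω) / (1 - Real.exp (-(k 0) * ω)) ∧
    ∀ j, j ≠ 0 → |φ t j| ≤ mc j / k j}


open Real MeasureTheory Set

section EuclideanNorm

variable {n : ℕ}

lemma eNorm_eq_norm_toLp (v : Fin n → ℝ) : eNorm v = ‖WithLp.toLp 2 v‖ := by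
  simp [eNorm, EuclideanSpace.norm_eq]

lemma eNorm_nonneg (v : Fin n → ℝ) : 0 ≤ eNorm v := sqrt_nonneg _

lemma abs_le_eNorm (v : Fin n → ℝ) (j : Fin n) : |v j| ≤ eNorm v := by
  simpa [eNorm_eq_norm_toLp] using PiLp.norm_apply_le (WithLp.toLp 2 v) j

lemma eNorm_sub_le (u v : Fin n → ℝ) : eNorm (u - v) ≤ eNorm u + eNorm v := by
  simpa [eNorm_eq_norm_toLp] using norm_sub_le (WithLp.toLp 2 u) (WithLp.toLp 2 v)

lemma abs_sub_le_sqrt_two_mul_eNorm (v : Fin n → ℝ) {i j : Fin n} (hij : i ≠ j) :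
    |v i - v j| ≤ √2 * eNorm v := by
  rw [← sqrt_sq_eq_abs, eNorm, ← sqrt_mul zero_le_two]
  refine sqrt_le_sqrt ?_
  have hpair : v i ^ 2 + v j ^ 2 ≤ ∑ l, v l ^ 2 := by
    simpa [Finset.sum_pair hij] using Finset.sum_le_sum_of_subset_of_nonneg
      (Finset.subset_univ {i, j}) fun l _ _ => sq_nonneg (v l)
  nlinarith [sq_nonneg (v i + v j)]

lemma eNorm_sub_succ_le (v : Fin (n + 1) → ℝ) :
    eNorm (fun i : Fin n => v 0 - v i.succ) ≤ √(2 * n) * eNorm v := by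
  have hterm : ∀ i : Fin n, (v 0 - v i.succ) ^ 2 ≤ 2 * eNorm v ^ 2 := fun i => by
    have := abs_sub_le_sqrt_two_mul_eNorm v (Fin.succ_ne_zero i).symm
    calc (v 0 - v i.succ) ^ 2 = |v 0 - v i.succ| ^ 2 := (sq_abs _).symm
      _ ≤ (√2 * eNorm v) ^ 2 := pow_le_pow_left₀ (abs_nonneg _) this 2
      _ = 2 * eNorm v ^ 2 := by rw [mul_pow, sq_sqrt zero_le_two]
  calc eNorm (fun i : Fin n => v 0 - v i.succ)
      ≤ √(∑ _i : Fin n, 2 * eNorm v ^ 2) := sqrt_le_sqrt (Finset.sum_le_sum fun i _ => hterm i)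
    _ = √(2 * n) * eNorm v := by
      rw [Finset.sum_const, Finset.card_univ, Fintype.card_fin, nsmul_eq_mul, ← mul_assoc,
        mul_comm (n : ℝ) 2, sqrt_mul (by positivity), sqrt_sq (eNorm_nonneg v)]

lemma continuous_of_abs_sub_le_mul_eNorm {f : (Fin n → ℝ) → ℝ} {K : ℝ} (hK : 0 ≤ K)
    (hf : ∀ z w, |f z - f w| ≤ K * eNorm (fun i => z i - w i)) : Continuous f := by
  have hlip : LipschitzWith ⟨K, hK⟩ (f ∘ WithLp.ofLp (p := 2)) :=
    LipschitzWith.of_dist_le_mul fun x y => by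
      rw [Real.dist_eq, dist_eq_norm]
      exact (hf x y).trans_eq (by rw [eNorm_eq_norm_toLp]; rfl)
  exact hlip.continuous.comp (PiLp.continuous_toLp 2 _)

end EuclideanNorm

lemma continuous_of_abs_sub_le_mul {f : ℝ → ℝ} {K : ℝ} (hK : 0 ≤ K)
    (hf : ∀ a b, |f a - f b| ≤ K * |a - b|) : Continuous f :=
  (LipschitzWith.of_dist_le_mul (K := ⟨K, hK⟩) fun a b => hf a b).continuous

section ExponentialKernel

variable {κ : ℝ}

lemma exp_neg_mul_sub (κ t s : ℝ) : exp (-κ * (t - s)) = exp (-(κ * t)) * exp (κ * s) := by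
  rw [← exp_add]; ring_nf

lemma integrableOn_exp_neg_mul_sub_Iic (hκ : 0 < κ) (t : ℝ) :
    IntegrableOn (fun s => exp (-κ * (t - s))) (Iic t) := by
  simp only [exp_neg_mul_sub]
  exact (integrableOn_exp_mul_Iic hκ t).const_mul _

lemma integral_exp_neg_mul_sub_Iic (hκ : 0 < κ) (t : ℝ) :
    ∫ s in Iic t, exp (-κ * (t - s)) = 1 / κ := by
  simp only [exp_neg_mul_sub, integral_const_mul, integral_exp_mul_Iic hκ]
  rw [mul_div_assoc', ← exp_add, neg_add_cancel, exp_zero]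

lemma integrableOn_exp_neg_mul_sub_mul_Iic (hκ : 0 < κ) (t : ℝ) {f : ℝ → ℝ}
    (hf : Measurable f) {M : ℝ} (hM : ∀ s, |f s| ≤ M) :
    IntegrableOn (fun s => exp (-κ * (t - s)) * f s) (Iic t) := by
  refine ((integrableOn_exp_neg_mul_sub_Iic hκ t).mul_const M).mono' (by fun_prop) ?_
  refine ae_of_all _ fun s => ?_
  rw [norm_mul, norm_of_nonneg (exp_pos _).le, Real.norm_eq_abs]
  exact mul_le_mul_of_nonneg_left (hM s) (exp_pos _).le

lemma abs_integral_exp_neg_mul_sub_mul_sub_le (hκ : 0 < κ) (t : ℝ) {f₁ f₂ : ℝ → ℝ}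
    (hf₁ : Measurable f₁) (hf₂ : Measurable f₂) {M C : ℝ}
    (hM₁ : ∀ s, |f₁ s| ≤ M) (hM₂ : ∀ s, |f₂ s| ≤ M) (hC : ∀ s, |f₁ s - f₂ s| ≤ C) :
    |(∫ s in Iic t, exp (-κ * (t - s)) * f₁ s) - ∫ s in Iic t, exp (-κ * (t - s)) * f₂ s|
      ≤ C / κ := by
  rw [← integral_sub (integrableOn_exp_neg_mul_sub_mul_Iic hκ t hf₁ hM₁)
    (integrableOn_exp_neg_mul_sub_mul_Iic hκ t hf₂ hM₂), ← Real.norm_eq_abs]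
  refine (norm_integral_le_of_norm_le ((integrableOn_exp_neg_mul_sub_Iic hκ t).const_mul C)
    (ae_of_all _ fun s => ?_)).trans_eq ?_
  · rw [← mul_sub, norm_mul, norm_of_nonneg (exp_pos _).le, Real.norm_eq_abs, mul_comm]
    exact mul_le_mul_of_nonneg_right (hC s) (exp_pos _).le
  · rw [integral_const_mul, integral_exp_neg_mul_sub_Iic hκ, mul_one_div]

lemma setIntegral_Iic_add (f : ℝ → ℝ) (t c : ℝ) :
    ∫ s in Iic (t + c), f s = ∫ s in Iic t, f (s + c) := by
  have hpre : (fun s => s + c) ⁻¹' Iic (t + c) = Iic t := by ext; simp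
  rw [← hpre, (measurePreserving_add_right volume c).setIntegral_preimage_emb
    (measurableEmbedding_addRight c)]

end ExponentialKernel

section ImpulseSums

lemma hasSum_ite_le_exp_neg_mul_sub {a : ℝ} (ha : 0 < a) (N : ℤ) :
    HasSum (fun i : ℤ => if i ≤ N then exp (-a * (N - i)) else 0) (1 - exp (-a))⁻¹ := by
  have hinj : Function.Injective fun j : ℕ => N - j := fun j₁ j₂ h => by simpa using h
  rw [← hinj.hasSum_iff]
  · convert hasSum_geometric_of_lt_one (exp_pos (-a)).le (exp_lt_one_iff.2 (neg_lt_zero.2 ha))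
      using 1
    funext j
    simp [← exp_nat_mul, mul_comm]
  · rintro i hi
    rw [if_neg]
    rintro hiN
    exact hi ⟨(N - i).toNat, by simp only; omega⟩

variable {ω κ : ℝ} {θ : ℤ → ℝ}

noncomputable def impulseKernel (θ : ℤ → ℝ) (κ t : ℝ) (i : ℤ) : ℝ :=
  if θ i < t then exp (-κ * (t - θ i)) else 0

lemma impulseKernel_nonneg (t : ℝ) (i : ℤ) : 0 ≤ impulseKernel θ κ t i := by
  unfold impulseKernel; split_ifs <;> positivity

lemma impulseKernel_le (hω : 0 < ω) (hθ : ∀ i : ℤ, (i : ℝ) * ω ≤ θ i ∧ θ i < ((i : ℝ) + 1) * ω)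
    (hκ : 0 ≤ κ) (t : ℝ) (i : ℤ) :
    impulseKernel θ κ t i
      ≤ exp (κ * ω) * if i ≤ ⌊t / ω⌋ then exp (-(κ * ω) * (⌊t / ω⌋ - i)) else 0 := by
  set N := ⌊t / ω⌋
  have hNt : N * ω ≤ t := (le_div_iff₀ hω).1 (Int.floor_le _)
  have htN : t < (N + 1) * ω := (div_lt_iff₀ hω).1 (Int.lt_floor_add_one _)
  unfold impulseKernel
  split_ifs with hi hiN
  · rw [← exp_add]
    refine exp_le_exp.2 ?_
    have hgap : ω * (N - i - 1) ≤ t - θ i := by nlinarith [(hθ i).2]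
    nlinarith [mul_le_mul_of_nonneg_left hgap hκ]
  · have : (i : ℝ) < N + 1 := lt_of_mul_lt_mul_right (((hθ i).1.trans_lt hi).trans htN) hω.le
    exact absurd (Int.lt_add_one_iff.1 (by exact_mod_cast this)) hiN
  · positivity
  · positivity

lemma summable_impulseKernel (hω : 0 < ω)
    (hθ : ∀ i : ℤ, (i : ℝ) * ω ≤ θ i ∧ θ i < ((i : ℝ) + 1) * ω) (hκ : 0 < κ) (t : ℝ) :
    Summable (impulseKernel θ κ t) :=
  ((hasSum_ite_le_exp_neg_mul_sub (mul_pos hκ hω) _).mul_left _).summable.of_nonneg_of_le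
    (impulseKernel_nonneg t) (impulseKernel_le hω hθ hκ.le t)

lemma tsum_impulseKernel_le (hω : 0 < ω)
    (hθ : ∀ i : ℤ, (i : ℝ) * ω ≤ θ i ∧ θ i < ((i : ℝ) + 1) * ω) (hκ : 0 < κ) (t : ℝ) :
    ∑' i, impulseKernel θ κ t i ≤ exp (κ * ω) / (1 - exp (-κ * ω)) := by
  have hdom := (hasSum_ite_le_exp_neg_mul_sub (mul_pos hκ hω) ⌊t / ω⌋).mul_left (exp (κ * ω))
  refine (Summable.tsum_le_tsum (impulseKernel_le hω hθ hκ.le t)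
    (summable_impulseKernel hω hθ hκ t) hdom.summable).trans_eq ?_
  rw [hdom.tsum_eq, neg_mul, div_eq_mul_inv]

lemma abs_tsum_impulse_sub_le (hω : 0 < ω)
    (hθ : ∀ i : ℤ, (i : ℝ) * ω ≤ θ i ∧ θ i < ((i : ℝ) + 1) * ω) (hκ : 0 < κ) (t : ℝ)
    {u v : ℤ → ℝ} {M C : ℝ} (hu : ∀ i, |u i| ≤ M) (hv : ∀ i, |v i| ≤ M)
    (huv : ∀ i, |u i - v i| ≤ C) :
    |(∑' i, if θ i < t then exp (-κ * (t - θ i)) * u i else 0)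
        - ∑' i, if θ i < t then exp (-κ * (t - θ i)) * v i else 0|
      ≤ C * (exp (κ * ω) / (1 - exp (-κ * ω))) := by
  simp only [← ite_zero_mul]
  change |∑' i, impulseKernel θ κ t i * u i - ∑' i, impulseKernel θ κ t i * v i| ≤ _
  have hK := summable_impulseKernel hω hθ hκ t
  have hK0 := impulseKernel_nonneg (θ := θ) (κ := κ) t
  have hsum : ∀ w : ℤ → ℝ, (∀ i, |w i| ≤ M) → Summable fun i => impulseKernel θ κ t i * w i :=
    fun w hw => (hK.mul_right M).of_norm_bounded fun i => by
      rw [norm_mul, norm_of_nonneg (hK0 i), Real.norm_eq_abs]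
      exact mul_le_mul_of_nonneg_left (hw i) (hK0 i)
  rw [← (hsum u hu).tsum_sub (hsum v hv), ← Real.norm_eq_abs]
  refine (tsum_of_norm_bounded (hK.hasSum.mul_left C) fun i => ?_).trans
    (mul_le_mul_of_nonneg_left (tsum_impulseKernel_le hω hθ hκ t) ((abs_nonneg _).trans (huv 0)))
  rw [← mul_sub, norm_mul, norm_of_nonneg (hK0 i), Real.norm_eq_abs, mul_comm]
  exact mul_le_mul_of_nonneg_right (huv i) (hK0 i)

end ImpulseSums

section FixedPoints

variable {m : ℕ} {ω : ℝ} {θ : ℤ → ℝ} {k : Fin (m + 1) → ℝ} {I₀ : ℝ} {g₀ : (Fin m → ℝ) → ℝ}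
  {g : Fin (m + 1) → ℝ → ℝ} {J₀ : ℝ → ℝ}

lemma Tmap_apply_zero (φ : ℝ → Fin (m + 1) → ℝ) (t : ℝ) :
    Tmap m θ k I₀ g₀ g J₀ φ t 0 =
      -(∫ s in Iic t, exp (-(k 0) * (t - s)) * g₀ (fun i => φ s 0 - φ s i.succ))
        + ∑' i : ℤ, (if θ i < t then exp (-(k 0) * (t - θ i)) * (I₀ + J₀ (φ (θ i) 0)) else 0) :=
  if_pos rfl

lemma Tmap_apply_of_ne_zero (φ : ℝ → Fin (m + 1) → ℝ) (t : ℝ) {j : Fin (m + 1)} (hj : j ≠ 0) :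
    Tmap m θ k I₀ g₀ g J₀ φ t j = ∫ s in Iic t, exp (-(k j) * (t - s)) * g j (φ s 0 - φ s j) :=
  if_neg hj

lemma Tmap_comp_add {q : ℤ} {c : ℝ} (hθ : ∀ i, θ (i + q) = θ i + c)
    (φ : ℝ → Fin (m + 1) → ℝ) (t : ℝ) :
    Tmap m θ k I₀ g₀ g J₀ φ (t + c) = Tmap m θ k I₀ g₀ g J₀ (fun s => φ (s + c)) t := by
  funext j
  by_cases hj : j = 0
  · subst hj
    rw [Tmap_apply_zero, Tmap_apply_zero, setIntegral_Iic_add, ← (Equiv.addRight q).tsum_eq]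
    simp only [Equiv.coe_addRight, hθ, add_sub_add_right_eq_sub, add_lt_add_iff_right]
  · rw [Tmap_apply_of_ne_zero _ _ hj, Tmap_apply_of_ne_zero _ _ hj, setIntegral_Iic_add]
    simp only [add_sub_add_right_eq_sub]

lemma abs_Tmap_apply_zero_sub_le (hω : 0 < ω)
    (hθ : ∀ i : ℤ, (i : ℝ) * ω ≤ θ i ∧ θ i < ((i : ℝ) + 1) * ω) (hk₀ : 0 < k 0)
    {l₀ lJ M₀ MJ : ℝ} (hl₀ : 0 ≤ l₀) (hlJ : 0 ≤ lJ)
    (hg₀lip : ∀ z w : Fin m → ℝ, |g₀ z - g₀ w| ≤ l₀ * eNorm (fun i => z i - w i))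
    (hJlip : ∀ a b : ℝ, |J₀ a - J₀ b| ≤ lJ * |a - b|)
    (hg₀bd : ∀ z, |g₀ z| ≤ M₀) (hJbd : ∀ a, |J₀ a| ≤ MJ)
    {φ ψ : ℝ → Fin (m + 1) → ℝ} (hφ : Measurable φ) (hψ : Measurable ψ)
    {D : ℝ} (hD : ∀ s, eNorm (φ s - ψ s) ≤ D) (t : ℝ) :
    |Tmap m θ k I₀ g₀ g J₀ φ t 0 - Tmap m θ k I₀ g₀ g J₀ ψ t 0|
      ≤ (l₀ * √(2 * m) / k 0 + lJ * exp (k 0 * ω) / (1 - exp (-(k 0) * ω))) * D := by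
  have hmeas : ∀ χ : ℝ → Fin (m + 1) → ℝ, Measurable χ →
      Measurable fun s => g₀ (fun i => χ s 0 - χ s i.succ) := fun χ hχ =>
    (continuous_of_abs_sub_le_mul_eNorm hl₀ hg₀lip).measurable.comp (by fun_prop)
  have hintegral := abs_integral_exp_neg_mul_sub_mul_sub_le hk₀ t (hmeas φ hφ) (hmeas ψ hψ)
    (fun _ => hg₀bd _) (fun _ => hg₀bd _) (C := l₀ * (√(2 * m) * D)) fun s => by
      refine (hg₀lip _ _).trans (mul_le_mul_of_nonneg_left ?_ hl₀)
      rw [funext fun i : Fin m => sub_sub_sub_comm (φ s 0) (φ s i.succ) (ψ s 0) (ψ s i.succ)]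
      exact (eNorm_sub_succ_le (φ s - ψ s)).trans
        (mul_le_mul_of_nonneg_left (hD s) (sqrt_nonneg _))
  have hsum := abs_tsum_impulse_sub_le hω hθ hk₀ t (C := lJ * D)
    (u := fun i => I₀ + J₀ (φ (θ i) 0)) (v := fun i => I₀ + J₀ (ψ (θ i) 0))
    (fun _ => (abs_add_le _ _).trans (add_le_add le_rfl (hJbd _)))
    (fun _ => (abs_add_le _ _).trans (add_le_add le_rfl (hJbd _))) fun i => by
      rw [add_sub_add_left_eq_sub]
      exact (hJlip _ _).trans (mul_le_mul_of_nonneg_left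
        ((abs_le_eNorm (φ (θ i) - ψ (θ i)) 0).trans (hD _)) hlJ)
  have hsplit : ∀ a b c d : ℝ, |(-a + b) - (-c + d)| ≤ |b - d| + |a - c| := fun a b c d => by
    rw [show (-a + b) - (-c + d) = (b - d) - (a - c) by ring]
    exact abs_sub _ _
  rw [Tmap_apply_zero, Tmap_apply_zero]
  exact (hsplit _ _ _ _).trans ((add_le_add hsum hintegral).trans_eq (by ring))

lemma abs_Tmap_apply_sub_le_of_ne_zero {j : Fin (m + 1)} (hj : j ≠ 0) (hkj : 0 < k j)
    {lj Mj : ℝ} (hlj : 0 ≤ lj) (hglip : ∀ a b : ℝ, |g j a - g j b| ≤ lj * |a - b|)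
    (hgbd : ∀ a, |g j a| ≤ Mj)
    {φ ψ : ℝ → Fin (m + 1) → ℝ} (hφ : Measurable φ) (hψ : Measurable ψ)
    {D : ℝ} (hD : ∀ s, eNorm (φ s - ψ s) ≤ D) (t : ℝ) :
    |Tmap m θ k I₀ g₀ g J₀ φ t j - Tmap m θ k I₀ g₀ g J₀ ψ t j| ≤ lj / k j * (√2 * D) := by
  have hmeas : ∀ χ : ℝ → Fin (m + 1) → ℝ, Measurable χ →
      Measurable fun s => g j (χ s 0 - χ s j) := fun χ hχ =>
    (continuous_of_abs_sub_le_mul hlj hglip).measurable.comp (by fun_prop)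
  rw [Tmap_apply_of_ne_zero _ _ hj, Tmap_apply_of_ne_zero _ _ hj]
  refine (abs_integral_exp_neg_mul_sub_mul_sub_le hkj t (hmeas φ hφ) (hmeas ψ hψ)
    (fun _ => hgbd _) (fun _ => hgbd _) (C := lj * (√2 * D)) fun s => ?_).trans_eq (by ring)
  refine (hglip _ _).trans (mul_le_mul_of_nonneg_left ?_ hlj)
  rw [sub_sub_sub_comm]
  exact (abs_sub_le_sqrt_two_mul_eNorm (φ s - ψ s) hj.symm).trans
    (mul_le_mul_of_nonneg_left (hD s) (sqrt_nonneg _))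

lemma eNorm_Tmap_sub_le (hω : 0 < ω)
    (hθ : ∀ i : ℤ, (i : ℝ) * ω ≤ θ i ∧ θ i < ((i : ℝ) + 1) * ω) (hk : ∀ j, 0 < k j)
    {l M : Fin (m + 1) → ℝ} {lJ MJ : ℝ} (hl : ∀ j, 0 ≤ l j) (hlJ : 0 ≤ lJ)
    (hg₀lip : ∀ z w : Fin m → ℝ, |g₀ z - g₀ w| ≤ l 0 * eNorm (fun i => z i - w i))
    (hglip : ∀ j, j ≠ 0 → ∀ a b : ℝ, |g j a - g j b| ≤ l j * |a - b|)
    (hJlip : ∀ a b : ℝ, |J₀ a - J₀ b| ≤ lJ * |a - b|)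
    (hg₀bd : ∀ z, |g₀ z| ≤ M 0) (hgbd : ∀ j, j ≠ 0 → ∀ a, |g j a| ≤ M j)
    (hJbd : ∀ a, |J₀ a| ≤ MJ)
    {φ ψ : ℝ → Fin (m + 1) → ℝ} (hφ : Measurable φ) (hψ : Measurable ψ)
    {D : ℝ} (hD : ∀ s, eNorm (φ s - ψ s) ≤ D) (t : ℝ) :
    eNorm (Tmap m θ k I₀ g₀ g J₀ φ t - Tmap m θ k I₀ g₀ g J₀ ψ t)
      ≤ √2 * √((l 0 * √(2 * m) / k 0 + lJ * exp (k 0 * ω) / (1 - exp (-(k 0) * ω))) ^ 2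
          + ∑ i : Fin m, (l i.succ / k i.succ) ^ 2) * D := by
  set c₀ := l 0 * √(2 * m) / k 0 + lJ * exp (k 0 * ω) / (1 - exp (-(k 0) * ω))
  set S := ∑ i : Fin m, (l i.succ / k i.succ) ^ 2
  set Δ := Tmap m θ k I₀ g₀ g J₀ φ t - Tmap m θ k I₀ g₀ g J₀ ψ t
  have hD₀ : 0 ≤ D := (eNorm_nonneg _).trans (hD 0)
  have hΔ₀ : |Δ 0| ≤ c₀ * D := abs_Tmap_apply_zero_sub_le hω hθ (hk 0) (hl 0) hlJ hg₀lip hJlip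
    hg₀bd hJbd hφ hψ hD t
  have hΔsucc : ∀ i : Fin m, |Δ i.succ| ≤ l i.succ / k i.succ * (√2 * D) := fun i =>
    abs_Tmap_apply_sub_le_of_ne_zero i.succ_ne_zero (hk _) (hl _) (hglip _ i.succ_ne_zero)
      (hgbd _ i.succ_ne_zero) hφ hψ hD t
  have hsq : ∀ {a b : ℝ}, |a| ≤ b → a ^ 2 ≤ b ^ 2 := fun h => sq_le_sq' (abs_le.1 h).1 (abs_le.1 h).2
  have hsum : ∑ j, Δ j ^ 2 ≤ 2 * (c₀ ^ 2 + S) * D ^ 2 := by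
    rw [Fin.sum_univ_succ]
    calc Δ 0 ^ 2 + ∑ i : Fin m, Δ i.succ ^ 2
        ≤ (c₀ * D) ^ 2 + ∑ i : Fin m, (l i.succ / k i.succ * (√2 * D)) ^ 2 :=
          add_le_add (hsq hΔ₀) (Finset.sum_le_sum fun i _ => hsq (hΔsucc i))
      _ = c₀ ^ 2 * D ^ 2 + 2 * S * D ^ 2 := by
          simp only [S, mul_pow, sq_sqrt zero_le_two, ← Finset.sum_mul]
          ring
      _ ≤ 2 * (c₀ ^ 2 + S) * D ^ 2 := by nlinarith [sq_nonneg c₀, sq_nonneg D]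
  calc eNorm Δ ≤ √(2 * (c₀ ^ 2 + S) * D ^ 2) := sqrt_le_sqrt hsum
    _ = √2 * √(c₀ ^ 2 + S) * D := by
      rw [sqrt_mul (by positivity), sqrt_mul zero_le_two, sqrt_sq hD₀]

lemma Tmap_fixedPoint_unique (hω : 0 < ω)
    (hθ : ∀ i : ℤ, (i : ℝ) * ω ≤ θ i ∧ θ i < ((i : ℝ) + 1) * ω) (hk : ∀ j, 0 < k j)
    {l M : Fin (m + 1) → ℝ} {lJ MJ : ℝ} (hl : ∀ j, 0 ≤ l j) (hlJ : 0 ≤ lJ)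
    (hg₀lip : ∀ z w : Fin m → ℝ, |g₀ z - g₀ w| ≤ l 0 * eNorm (fun i => z i - w i))
    (hglip : ∀ j, j ≠ 0 → ∀ a b : ℝ, |g j a - g j b| ≤ l j * |a - b|)
    (hJlip : ∀ a b : ℝ, |J₀ a - J₀ b| ≤ lJ * |a - b|)
    (hg₀bd : ∀ z, |g₀ z| ≤ M 0) (hgbd : ∀ j, j ≠ 0 → ∀ a, |g j a| ≤ M j)
    (hJbd : ∀ a, |J₀ a| ≤ MJ)
    (hL : √2 * √((l 0 * √(2 * m) / k 0 + lJ * exp (k 0 * ω) / (1 - exp (-(k 0) * ω))) ^ 2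
      + ∑ i : Fin m, (l i.succ / k i.succ) ^ 2) < 1)
    {φ ψ : ℝ → Fin (m + 1) → ℝ} (hφ : Measurable φ) (hψ : Measurable ψ)
    (hφb : ∃ B, ∀ t, eNorm (φ t) ≤ B) (hψb : ∃ B, ∀ t, eNorm (ψ t) ≤ B)
    (hφT : ∀ t, φ t = Tmap m θ k I₀ g₀ g J₀ φ t) (hψT : ∀ t, ψ t = Tmap m θ k I₀ g₀ g J₀ ψ t) :
    φ = ψ := by
  obtain ⟨Bφ, hBφ⟩ := hφb
  obtain ⟨Bψ, hBψ⟩ := hψb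
  have hbdd : BddAbove (range fun s => eNorm (φ s - ψ s)) := ⟨Bφ + Bψ, by
    rintro _ ⟨s, rfl⟩
    exact (eNorm_sub_le _ _).trans (add_le_add (hBφ s) (hBψ s))⟩
  set D := ⨆ s, eNorm (φ s - ψ s)
  have hD : ∀ s, eNorm (φ s - ψ s) ≤ D := le_ciSup hbdd
  have hcontract : D ≤ _ * D := ciSup_le fun t => by
    rw [hφT t, hψT t]
    exact eNorm_Tmap_sub_le hω hθ hk hl hlJ hg₀lip hglip hJlip hg₀bd hgbd hJbd hφ hψ hD t
  have hD₀ : D ≤ 0 := by nlinarith [(eNorm_nonneg _).trans (hD 0)]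
  funext t j
  exact sub_eq_zero.1 (abs_nonpos_iff.1 ((abs_le_eNorm (φ t - ψ t) j).trans ((hD t).trans hD₀)))

end FixedPoints

theorem stmt6_general
    (m : ℕ) (ω : ℝ) (hω : 0 < ω) (θ : ℤ → ℝ)
    (hθ : ∀ i : ℤ, (i : ℝ) * ω ≤ θ i ∧ θ i < ((i : ℝ) + 1) * ω)
    (k : Fin (m + 1) → ℝ) (hk : ∀ j, 0 < k j) (I₀ : ℝ)
    (g₀ : (Fin m → ℝ) → ℝ) (g : Fin (m + 1) → ℝ → ℝ) (J₀ : ℝ → ℝ)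
    (l : Fin (m + 1) → ℝ) (lJ : ℝ) (mc : Fin (m + 1) → ℝ) (mJ : ℝ)
    (hl : ∀ j, 0 ≤ l j) (hlJ : 0 ≤ lJ)
    (hg₀lip : ∀ z w : Fin m → ℝ, |g₀ z - g₀ w| ≤ l 0 * eNorm (fun i => z i - w i))
    (hglip : ∀ j, j ≠ 0 → ∀ a b : ℝ, |g j a - g j b| ≤ l j * |a - b|)
    (hJlip : ∀ a b : ℝ, |J₀ a - J₀ b| ≤ lJ * |a - b|)
    (hg₀bd : ∀ z, |g₀ z| ≤ mc 0)
    (hgbd : ∀ j, j ≠ 0 → ∀ a, |g j a| ≤ mc j)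
    (hJbd : ∀ a, |J₀ a| ≤ mJ)
    (hL : Real.sqrt 2 * Real.sqrt ((l 0 * Real.sqrt (2 * m) / k 0 + lJ * Real.exp (k 0 * ω) / (1 - Real.exp (-(k 0) * ω))) ^ 2 + ∑ i : Fin m, (l i.succ / k i.succ) ^ 2) < 1)
    (p : ℕ) (hθp : ∀ i : ℤ, θ (i + (p : ℤ)) = θ i + (p : ℝ) * ω) :
    ∀ ξ : ℝ → Fin (m + 1) → ℝ,
      (Measurable ξ ∧ (∃ B, ∀ t, eNorm (ξ t) ≤ B) ∧ ∀ t, ξ t = Tmap m θ k I₀ g₀ g J₀ ξ t) →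
      ∀ t : ℝ, ξ (t + (p : ℝ) * ω) = ξ t := by
  rintro ξ ⟨hξ, ⟨B, hB⟩, hξT⟩
  have hshift : ∀ t, ξ (t + p * ω) = Tmap m θ k I₀ g₀ g J₀ (fun s => ξ (s + p * ω)) t :=
    fun t => (hξT _).trans (Tmap_comp_add hθp ξ t)
  exact congrFun (Tmap_fixedPoint_unique hω hθ hk hl hlJ hg₀lip hglip hJlip hg₀bd hgbd hJbd hL
    (hξ.comp (measurable_add_const _)) hξ ⟨B, fun _ => hB _⟩ ⟨B, hB⟩ hshift hξT)

/-- Assume `√2·L < 1`, let `p ≥ 1`, and suppose `θ_{i+p} = θ_i + p·ω` for all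
`i ∈ ℤ`. Then the unique bounded measurable `ξ` with `ξ = Tξ` is `pω`-periodic
(assertion 1 of Theorem 1). -/
theorem stmt6
    (m : ℕ) (hm : 1 ≤ m) (ω : ℝ) (hω : 0 < ω) (θ : ℤ → ℝ)
    (hθ : ∀ i : ℤ, (i : ℝ) * ω ≤ θ i ∧ θ i < ((i : ℝ) + 1) * ω)
    (k : Fin (m + 1) → ℝ) (hk : ∀ j, 0 < k j) (I₀ : ℝ) (hI : 0 < I₀)
    (g₀ : (Fin m → ℝ) → ℝ) (g : Fin (m + 1) → ℝ → ℝ) (J₀ : ℝ → ℝ)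
    (l : Fin (m + 1) → ℝ) (lJ : ℝ) (mc : Fin (m + 1) → ℝ) (mJ : ℝ)
    (hl : ∀ j, 0 ≤ l j) (hlJ : 0 ≤ lJ) (hmc : ∀ j, 0 ≤ mc j) (hmJ : 0 ≤ mJ)
    (hg₀lip : ∀ z w : Fin m → ℝ, |g₀ z - g₀ w| ≤ l 0 * eNorm (fun i => z i - w i))
    (hglip : ∀ j, j ≠ 0 → ∀ a b : ℝ, |g j a - g j b| ≤ l j * |a - b|)
    (hJlip : ∀ a b : ℝ, |J₀ a - J₀ b| ≤ lJ * |a - b|)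
    (hg₀bd : ∀ z, |g₀ z| ≤ mc 0)
    (hgbd : ∀ j, j ≠ 0 → ∀ a, |g j a| ≤ mc j)
    (hJbd : ∀ a, |J₀ a| ≤ mJ)
    (hL : Real.sqrt 2 * Real.sqrt ((l 0 * Real.sqrt (2 * m) / k 0 + lJ * Real.exp (k 0 * ω) / (1 - Real.exp (-(k 0) * ω))) ^ 2 + ∑ i : Fin m, (l i.succ / k i.succ) ^ 2) < 1)
    (p : ℕ) (hp : 1 ≤ p) (hθp : ∀ i : ℤ, θ (i + (p : ℤ)) = θ i + (p : ℝ) * ω) :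
    ∀ ξ : ℝ → Fin (m + 1) → ℝ,
      (Measurable ξ ∧ (∃ B, ∀ t, eNorm (ξ t) ≤ B) ∧ ∀ t, ξ t = Tmap m θ k I₀ g₀ g J₀ ξ t) →
      ∀ t : ℝ, ξ (t + (p : ℝ) * ω) = ξ t :=
  stmt6_general m ω hω θ hθ k hk I₀ g₀ g J₀ l lJ mc mJ hl hlJ hg₀lip hglip hJlip hg₀bd hgbd hJbd hL
    p hθp
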